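/- (Geometric quasilinearization representation.) A state U = (ρ, m, E) belongs to 𝒢 if and only if ρ > 0 and φ(U; z, u*) > 0 for every u* ∈ ℝ² and every z ∈ ℝ² with z ≠ 0. -/

import Mathlib

open Matrix

noncomputable section

/-- A state is a triple `(ρ, m, E)` with `ρ : ℝ`, `m : ℝ²`, `E` a 2×2 real matrix. -/
abbrev Mat2 := Matrix (Fin 2) (Fin 2) ℝ

/-- The pressure tensor `p(U) = 2E - (1/ρ) m mᵀ`. -/
def pTensor (ρ : ℝ) (m : Fin 2 → ℝ) (E : Mat2) : Mat2 :=
  (2 : ℝ) • E - ρ⁻¹ • vecMulVec m m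

/-- `φ(U; z, u*) = zᵀEz − (m·z)(u*·z) + (ρ/2)(u*·z)²`. -/
def phi (ρ : ℝ) (m : Fin 2 → ℝ) (E : Mat2) (z u : Fin 2 → ℝ) : ℝ :=
  z ⬝ᵥ (E *ᵥ z) - (m ⬝ᵥ z) * (u ⬝ᵥ z) + (ρ / 2) * (u ⬝ᵥ z) ^ 2

/-- The admissible set `𝒢`: states with positive density and positive definite pressure tensor. -/
def G : Set (ℝ × (Fin 2 → ℝ) × Mat2) :=
  {U | 0 < U.1 ∧ (pTensor U.1 U.2.1 U.2.2).PosDef}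

/-- The closed admissible set `𝒢̄`: states (so `E` symmetric) with `ρ ≥ 0` and
`φ(U; z, u*) ≥ 0` for all `z, u*`. -/
def Gbar : Set (ℝ × (Fin 2 → ℝ) × Mat2) :=
  {U | 0 ≤ U.1 ∧ U.2.2.IsSymm ∧ ∀ z u : Fin 2 → ℝ, 0 ≤ phi U.1 U.2.1 U.2.2 z u}

/-!
Completing the square in `u* · z` gives, for `ρ ≠ 0`,
`φ(U; z, u*) = ½ zᵀ p(U) z + (ρ/2) (u* · z − (m · z)/ρ)²`.
For `ρ > 0` the second term is nonnegative and vanishes for a suitable `u*`, so positivity of `φ`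
over all `u*` is exactly positivity of the quadratic form of `p(U)`.
-/

theorem dotProduct_vecMulVec_self_mulVec {n α : Type*} [Fintype n] [CommRing α] (m z : n → α) :
    z ⬝ᵥ (vecMulVec m m *ᵥ z) = (m ⬝ᵥ z) ^ 2 := by
  rw [vecMulVec_mulVec, op_smul_eq_smul, dotProduct_smul, smul_eq_mul, dotProduct_comm, sq]

theorem exists_dotProduct_eq {n K : Type*} [Fintype n] [DecidableEq n] [Field K] {z : n → K}
    (hz : z ≠ 0) (c : K) : ∃ u : n → K, u ⬝ᵥ z = c := by
  obtain ⟨i, hi⟩ := Function.ne_iff.mp hz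
  exact ⟨Pi.single i (c / z i), by rw [single_dotProduct, div_mul_cancel₀ c hi]⟩

theorem pTensor_isSymm {E : Mat2} (hE : E.IsSymm) (ρ : ℝ) (m : Fin 2 → ℝ) :
    (pTensor ρ m E).IsSymm :=
  (hE.smul 2).sub (IsSymm.smul (transpose_vecMulVec m m) ρ⁻¹)

theorem dotProduct_pTensor_mulVec (ρ : ℝ) (m : Fin 2 → ℝ) (E : Mat2) (z : Fin 2 → ℝ) :
    z ⬝ᵥ (pTensor ρ m E *ᵥ z) = 2 * (z ⬝ᵥ (E *ᵥ z)) - ρ⁻¹ * (m ⬝ᵥ z) ^ 2 := by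
  rw [pTensor, sub_mulVec, dotProduct_sub, smul_mulVec, smul_mulVec, dotProduct_smul,
    dotProduct_smul, dotProduct_vecMulVec_self_mulVec, smul_eq_mul, smul_eq_mul]

theorem phi_eq_half_dotProduct_pTensor_add_sq {ρ : ℝ} (hρ : ρ ≠ 0) (m : Fin 2 → ℝ) (E : Mat2)
    (z u : Fin 2 → ℝ) :
    phi ρ m E z u =
      z ⬝ᵥ (pTensor ρ m E *ᵥ z) / 2 + ρ / 2 * (u ⬝ᵥ z - (m ⬝ᵥ z) / ρ) ^ 2 := by
  rw [phi, dotProduct_pTensor_mulVec]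
  field_simp
  ring

/-- Geometric quasilinearization (GQL) representation of the admissible set `𝒢`. -/
theorem gql_representation (ρ : ℝ) (m : Fin 2 → ℝ) (E : Mat2) (hE : E.IsSymm) :
    (ρ, m, E) ∈ G ↔
      (0 < ρ ∧ ∀ u : Fin 2 → ℝ, ∀ z : Fin 2 → ℝ, z ≠ 0 → 0 < phi ρ m E z u) := by
  simp only [G, Set.mem_ofPred_eq]
  refine and_congr_right fun hρ => ⟨fun hp u z hz => ?_, fun hφ => ?_⟩
  · have hpz : 0 < z ⬝ᵥ (pTensor ρ m E *ᵥ z) := by simpa using hp.dotProduct_mulVec_pos hz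
    rw [phi_eq_half_dotProduct_pTensor_add_sq hρ.ne']
    positivity
  · refine .of_dotProduct_mulVec_pos (isHermitian_iff_isSymm.mpr (pTensor_isSymm hE ρ m))
      fun z hz => ?_
    obtain ⟨u, hu⟩ := exists_dotProduct_eq hz ((m ⬝ᵥ z) / ρ)
    have hφz := hφ u z hz
    rw [phi_eq_half_dotProduct_pTensor_add_sq hρ.ne', hu, sub_self] at hφz
    simpa using hφz
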